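/- If p > p_0, then there exists ε0 with 0 < ε0 < c1·c2·(μ2 − μ1)/(c1·μ1 + c2·μ2) such that for every ε ∈ (0, ε0) the unique minimizer of E_ε over ℝ is ω_(ε,1); consequently these minimizers converge to 1/μ1 as ε → 0⁺. If p < p_0, then there exists ε0 > 0 such that for every ε ∈ (0, ε0) the unique minimizer of E_ε over ℝ is ω_(ε,2); consequently these minimizers converge to 1/μ2 as ε → 0⁺. -/

import Mathlib

/-- Relaxed iteration count of a single task with constant `c`, eigenvalue `μ`,
contraction factor `lam`, at initial-guess coefficient `ω`. -/
noncomputable def Leps (ε c μ lam ω : ℝ) : ℝ :=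
  if ω * μ = 1 then 0
  else max 0 (Real.log (ε / (c * |ω * μ - 1|)) / Real.log lam)

/-- Expected relaxed iteration count over the two tasks. -/
noncomputable def Eeps (p ε c1 c2 μ1 μ2 l1 l2 ω : ℝ) : ℝ :=
  p * Leps ε c1 μ1 l1 ω + (1 - p) * Leps ε c2 μ2 l2 ω

/-- `ω_(ε,1) = 1/μ1 − ε/(c1·μ1)`. -/
noncomputable def omegaE1 (ε c1 μ1 : ℝ) : ℝ := 1 / μ1 - ε / (c1 * μ1)

/-- `ω_(ε,2) = 1/μ2 + ε/(c2·μ2)`. -/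
noncomputable def omegaE2 (ε c2 μ2 : ℝ) : ℝ := 1 / μ2 + ε / (c2 * μ2)

/-- Threshold probability `p_ε`. -/
noncomputable def pEps (ε c1 c2 μ1 μ2 l1 l2 : ℝ) : ℝ :=
  Leps ε c2 μ2 l2 (omegaE1 ε c1 μ1) /
  (Leps ε c1 μ1 l1 (omegaE2 ε c2 μ2) + Leps ε c2 μ2 l2 (omegaE1 ε c1 μ1))

/-- Limiting threshold probability `p_0`. -/
noncomputable def pZero (l1 l2 : ℝ) : ℝ :=
  Real.log l1 / (Real.log l1 + Real.log l2)

/-!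
On `[ω_(ε,2), ω_(ε,1)]` neither iteration count is clipped at `0` and each is an affine function
of `log |ω μ_i - 1|`, so `E_ε` is concave there. Right of `ω_(ε,1)` the first count is `≥ 0`,
its value at `ω_(ε,1)`, while the second strictly increases; symmetrically left of `ω_(ε,2)`.
Hence the unique minimizer of `E_ε` is the endpoint with the smaller value among
`E_ε(ω_(ε,1)) = (1-p) L_ε(2, ω_(ε,1))` and `E_ε(ω_(ε,2)) = p L_ε(1, ω_(ε,2))`. Their difference
is `(p / log λ1 - (1-p) / log λ2) log ε + O(1)` as `ε → 0⁺`, and the coefficient of `log ε` has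
the sign of `p_0 - p`.
-/

open Filter Topology Set

lemma ConcaveOn.comp_mul_add {f : ℝ → ℝ} {s : Set ℝ} (hf : ConcaveOn ℝ s f) (m k : ℝ) :
    ConcaveOn ℝ ((fun x => m * x + k) ⁻¹' s) (fun x => f (m * x + k)) :=
  hf.comp_affineMap ((LinearMap.mulLeft ℝ m).toAffineMap + AffineMap.const ℝ ℝ k)

lemma ConcaveOn.min_lt_of_mem_Ioo {f : ℝ → ℝ} {a b x : ℝ} (hf : ConcaveOn ℝ (Icc a b) f)
    (hx : x ∈ Ioo a b) (hne : f a ≠ f b) : min (f a) (f b) < f x := by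
  obtain ⟨hax, hxb⟩ := hx
  have hab : 0 < b - a := by linarith
  set s := (b - x) / (b - a) with hs_def
  set t := (x - a) / (b - a) with ht_def
  have hs : 0 < s := div_pos (by linarith) hab
  have ht : 0 < t := div_pos (by linarith) hab
  have hst : s + t = 1 := by rw [hs_def, ht_def]; field_simp; ring
  have hx : s * a + t * b = x := by rw [hs_def, ht_def]; field_simp; ring
  have hcomb : s * f a + t * f b ≤ f x := by
    simpa only [smul_eq_mul, hx] using
      hf.2 (left_mem_Icc.2 (by linarith)) (right_mem_Icc.2 (by linarith)) hs.le ht.le hst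
  rcases hne.lt_or_gt with h | h
  · have : s * f a + t * f a = f a := by rw [← add_mul, hst, one_mul]
    rw [min_eq_left h.le]
    linarith [mul_lt_mul_of_pos_left h ht]
  · have : s * f b + t * f b = f b := by rw [← add_mul, hst, one_mul]
    rw [min_eq_right h.le]
    linarith [mul_lt_mul_of_pos_left h hs]

lemma ConcaveOn.apply_right_lt_of_ne {f : ℝ → ℝ} {a b x : ℝ} (hf : ConcaveOn ℝ (Icc a b) f)
    (hleft : ∀ y < a, f a < f y) (hright : ∀ y > b, f b < f y) (hba : f b < f a)
    (hx : x ≠ b) : f b < f x := by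
  rcases lt_trichotomy x a with hxa | rfl | hax
  · exact hba.trans (hleft x hxa)
  · exact hba
  rcases hx.lt_or_gt with hxb | hbx
  · simpa [min_eq_right hba.le] using hf.min_lt_of_mem_Ioo ⟨hax, hxb⟩ hba.ne'
  · exact hright x hbx

lemma ConcaveOn.apply_left_lt_of_ne {f : ℝ → ℝ} {a b x : ℝ} (hf : ConcaveOn ℝ (Icc a b) f)
    (hleft : ∀ y < a, f a < f y) (hright : ∀ y > b, f b < f y) (hab : f a < f b)
    (hx : x ≠ a) : f a < f x := by
  rcases lt_trichotomy x b with hxb | rfl | hbx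
  · rcases hx.lt_or_gt with hxa | hax
    · exact hleft x hxa
    · simpa [min_eq_left hab.le] using hf.min_lt_of_mem_Ioo ⟨hax, hxb⟩ hab.ne
  · exact hab
  · exact hab.trans (hright x hbx)

lemma exists_forall_Ioo_of_eventually_nhdsGT {P : ℝ → Prop} {a b : ℝ}
    (h : ∀ᶠ x in 𝓝[>] a, P x) (hab : a < b) : ∃ u, a < u ∧ u < b ∧ ∀ x ∈ Ioo a u, P x := by
  obtain ⟨u, hau, hu⟩ := (nhdsGT_basis a).eventually_iff.1 h
  refine ⟨min u ((a + b) / 2), lt_min hau (by linarith), (min_le_right _ _).trans_lt (by linarith),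
    fun x hx => hu ⟨hx.1, hx.2.trans_le (min_le_left _ _)⟩⟩

/-- The iteration count before clipping at `0`, as a function of the residual `z = |ω μ - 1|`. -/
noncomputable def unclippedLeps (ε c lam z : ℝ) : ℝ := Real.log (ε / (c * z)) / Real.log lam

lemma unclippedLeps_eq {ε c lam z : ℝ} (hε : ε ≠ 0) (hc : c ≠ 0) (hz : z ≠ 0) :
    unclippedLeps ε c lam z = (Real.log c + Real.log z - Real.log ε) / -Real.log lam := by
  rw [unclippedLeps, Real.log_div hε (mul_ne_zero hc hz), Real.log_mul hc hz, div_neg, neg_div']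
  ring_nf

lemma unclippedLeps_nonneg {ε c lam z : ℝ} (hε : 0 < ε) (hlam : Real.log lam < 0)
    (hz : ε ≤ c * z) : 0 ≤ unclippedLeps ε c lam z := by
  have hcz : 0 < c * z := hε.trans_le hz
  exact div_nonneg_of_nonpos
    (Real.log_nonpos (div_nonneg hε.le hcz.le) ((div_le_one hcz).2 hz)) hlam.le

lemma strictMonoOn_unclippedLeps {ε c lam : ℝ} (hε : ε ≠ 0) (hc : c ≠ 0)
    (hlam : Real.log lam < 0) : StrictMonoOn (unclippedLeps ε c lam) (Ioi 0) := by
  intro z hz z' hz' hzz'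
  rw [unclippedLeps_eq hε hc (ne_of_gt hz), unclippedLeps_eq hε hc (ne_of_gt hz')]
  have := Real.log_lt_log hz hzz'
  exact div_lt_div_of_pos_right (by linarith) (neg_pos.2 hlam)

lemma concaveOn_unclippedLeps {ε c lam : ℝ} (hε : ε ≠ 0) (hc : c ≠ 0)
    (hlam : Real.log lam < 0) : ConcaveOn ℝ (Ioi 0) (unclippedLeps ε c lam) := by
  refine ((strictConcaveOn_log_Ioi.concaveOn.add_const (Real.log c - Real.log ε)).smul
    (inv_nonneg.2 (neg_pos.2 hlam).le)).congr fun z hz => ?_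
  simp only [Pi.add_apply, smul_eq_mul]
  rw [unclippedLeps_eq hε hc (ne_of_gt hz)]
  ring

lemma tendsto_unclippedLeps_sub_log {c lam z0 : ℝ} {z : ℝ → ℝ} (hz : Tendsto z (𝓝[>] 0) (𝓝 z0))
    (hz0 : c * z0 ≠ 0) :
    Tendsto (fun ε => unclippedLeps ε c lam (z ε) - Real.log ε / Real.log lam) (𝓝[>] 0)
      (𝓝 (-Real.log (c * z0) / Real.log lam)) := by
  refine (((hz.const_mul c).log hz0).neg.div_const _).congr' ?_
  filter_upwards [self_mem_nhdsWithin, (hz.const_mul c).eventually_ne hz0] with ε hε hcz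
  rw [unclippedLeps, Real.log_div (ne_of_gt hε) hcz]
  ring

section OneTask

variable {ε c μ lam ω : ℝ}

lemma Leps_nonneg (ε c μ lam ω : ℝ) : 0 ≤ Leps ε c μ lam ω := by
  unfold Leps
  split
  · exact le_rfl
  · exact le_max_left _ _

lemma Leps_eq_unclippedLeps (hε : 0 < ε) (hlam : Real.log lam < 0)
    (h : ε ≤ c * |ω * μ - 1|) : Leps ε c μ lam ω = unclippedLeps ε c lam |ω * μ - 1| := by
  have hne : ω * μ ≠ 1 := by
    rintro heq
    rw [heq, sub_self, abs_zero, mul_zero] at h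
    linarith
  rw [Leps, if_neg hne]
  exact max_eq_right (unclippedLeps_nonneg hε hlam h)

lemma omegaE1_mul (hc : c ≠ 0) (hμ : μ ≠ 0) : omegaE1 ε c μ * μ = 1 - ε / c := by
  unfold omegaE1
  field_simp

lemma omegaE2_mul (hc : c ≠ 0) (hμ : μ ≠ 0) : omegaE2 ε c μ * μ = 1 + ε / c := by
  unfold omegaE2
  field_simp

lemma le_omegaE1_iff (hc : c ≠ 0) (hμ : 0 < μ) : ω ≤ omegaE1 ε c μ ↔ ε / c ≤ 1 - ω * μ := by
  rw [← mul_le_mul_iff_of_pos_right hμ, omegaE1_mul hc hμ.ne']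
  constructor <;> intro h <;> linarith

lemma omegaE2_le_iff (hc : c ≠ 0) (hμ : 0 < μ) : omegaE2 ε c μ ≤ ω ↔ ε / c ≤ ω * μ - 1 := by
  rw [← mul_le_mul_iff_of_pos_right hμ, omegaE2_mul hc hμ.ne']
  constructor <;> intro h <;> linarith

lemma tendsto_omegaE1 (c μ : ℝ) : Tendsto (fun ε => omegaE1 ε c μ) (𝓝 0) (𝓝 (1 / μ)) := by
  have : Continuous fun ε => omegaE1 ε c μ := continuous_const.sub (continuous_id.div_const _)
  simpa [omegaE1] using this.tendsto 0

lemma tendsto_omegaE2 (c μ : ℝ) : Tendsto (fun ε => omegaE2 ε c μ) (𝓝 0) (𝓝 (1 / μ)) := by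
  have : Continuous fun ε => omegaE2 ε c μ := continuous_const.add (continuous_id.div_const _)
  simpa [omegaE2] using this.tendsto 0

lemma Leps_of_le_omegaE1 (hε : 0 < ε) (hc : 0 < c) (hμ : 0 < μ) (hlam : Real.log lam < 0)
    (hω : ω ≤ omegaE1 ε c μ) : Leps ε c μ lam ω = unclippedLeps ε c lam (1 - ω * μ) := by
  have h := (le_omegaE1_iff hc.ne' hμ).1 hω
  have habs : |ω * μ - 1| = 1 - ω * μ := by
    rw [abs_sub_comm, abs_of_pos ((div_pos hε hc).trans_le h)]
  rw [Leps_eq_unclippedLeps hε hlam (by rw [habs]; exact (div_le_iff₀' hc).1 h), habs]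

lemma Leps_of_omegaE2_le (hε : 0 < ε) (hc : 0 < c) (hμ : 0 < μ) (hlam : Real.log lam < 0)
    (hω : omegaE2 ε c μ ≤ ω) : Leps ε c μ lam ω = unclippedLeps ε c lam (ω * μ - 1) := by
  have h := (omegaE2_le_iff hc.ne' hμ).1 hω
  have habs : |ω * μ - 1| = ω * μ - 1 := abs_of_pos ((div_pos hε hc).trans_le h)
  rw [Leps_eq_unclippedLeps hε hlam (by rw [habs]; exact (div_le_iff₀' hc).1 h), habs]

lemma Leps_omegaE1 (hε : 0 < ε) (hc : 0 < c) (hμ : 0 < μ) (hlam : Real.log lam < 0) :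
    Leps ε c μ lam (omegaE1 ε c μ) = 0 := by
  rw [Leps_of_le_omegaE1 hε hc hμ hlam le_rfl, omegaE1_mul hc.ne' hμ.ne', sub_sub_cancel,
    unclippedLeps, mul_div_cancel₀ _ hc.ne', div_self hε.ne', Real.log_one, zero_div]

lemma Leps_omegaE2 (hε : 0 < ε) (hc : 0 < c) (hμ : 0 < μ) (hlam : Real.log lam < 0) :
    Leps ε c μ lam (omegaE2 ε c μ) = 0 := by
  rw [Leps_of_omegaE2_le hε hc hμ hlam le_rfl, omegaE2_mul hc.ne' hμ.ne', add_sub_cancel_left,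
    unclippedLeps, mul_div_cancel₀ _ hc.ne', div_self hε.ne', Real.log_one, zero_div]

lemma strictAntiOn_Leps (hε : 0 < ε) (hc : 0 < c) (hμ : 0 < μ) (hlam : Real.log lam < 0) :
    StrictAntiOn (Leps ε c μ lam) (Iic (omegaE1 ε c μ)) := by
  intro ω hω ω' hω' hlt
  rw [Leps_of_le_omegaE1 hε hc hμ hlam hω, Leps_of_le_omegaE1 hε hc hμ hlam hω']
  have hpos := (div_pos hε hc).trans_le ((le_omegaE1_iff hc.ne' hμ).1 hω')
  exact strictMonoOn_unclippedLeps hε.ne' hc.ne' hlam hpos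
    (hpos.trans (by nlinarith)) (by nlinarith)

lemma strictMonoOn_Leps (hε : 0 < ε) (hc : 0 < c) (hμ : 0 < μ) (hlam : Real.log lam < 0) :
    StrictMonoOn (Leps ε c μ lam) (Ici (omegaE2 ε c μ)) := by
  intro ω hω ω' hω' hlt
  rw [Leps_of_omegaE2_le hε hc hμ hlam hω, Leps_of_omegaE2_le hε hc hμ hlam hω']
  have hpos := (div_pos hε hc).trans_le ((omegaE2_le_iff hc.ne' hμ).1 hω)
  exact strictMonoOn_unclippedLeps hε.ne' hc.ne' hlam hpos
    (hpos.trans (by nlinarith)) (by nlinarith)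

lemma concaveOn_Leps_Iic (hε : 0 < ε) (hc : 0 < c) (hμ : 0 < μ) (hlam : Real.log lam < 0) :
    ConcaveOn ℝ (Iic (omegaE1 ε c μ)) (Leps ε c μ lam) := by
  refine (((concaveOn_unclippedLeps hε.ne' hc.ne' hlam).comp_mul_add (-μ) 1).subset
    (fun ω hω => ?_) (convex_Iic _)).congr fun ω hω => ?_
  · have := (div_pos hε hc).trans_le ((le_omegaE1_iff hc.ne' hμ).1 hω)
    simp only [mem_preimage, mem_Ioi]
    linarith
  · rw [Leps_of_le_omegaE1 hε hc hμ hlam hω]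
    ring_nf

lemma concaveOn_Leps_Ici (hε : 0 < ε) (hc : 0 < c) (hμ : 0 < μ) (hlam : Real.log lam < 0) :
    ConcaveOn ℝ (Ici (omegaE2 ε c μ)) (Leps ε c μ lam) := by
  refine (((concaveOn_unclippedLeps hε.ne' hc.ne' hlam).comp_mul_add μ (-1)).subset
    (fun ω hω => ?_) (convex_Ici _)).congr fun ω hω => ?_
  · have := (div_pos hε hc).trans_le ((omegaE2_le_iff hc.ne' hμ).1 hω)
    simp only [mem_preimage, mem_Ioi]
    linarith
  · rw [Leps_of_omegaE2_le hε hc hμ hlam hω]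
    ring_nf

end OneTask

section TwoTasks

variable {p ε c1 c2 μ1 μ2 l1 l2 : ℝ}

lemma Eeps_omegaE1 (hε : 0 < ε) (hc1 : 0 < c1) (hμ1 : 0 < μ1) (hl1 : Real.log l1 < 0) :
    Eeps p ε c1 c2 μ1 μ2 l1 l2 (omegaE1 ε c1 μ1) =
      (1 - p) * Leps ε c2 μ2 l2 (omegaE1 ε c1 μ1) := by
  rw [Eeps, Leps_omegaE1 hε hc1 hμ1 hl1, mul_zero, zero_add]

lemma Eeps_omegaE2 (hε : 0 < ε) (hc2 : 0 < c2) (hμ2 : 0 < μ2) (hl2 : Real.log l2 < 0) :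
    Eeps p ε c1 c2 μ1 μ2 l1 l2 (omegaE2 ε c2 μ2) = p * Leps ε c1 μ1 l1 (omegaE2 ε c2 μ2) := by
  rw [Eeps, Leps_omegaE2 hε hc2 hμ2 hl2, mul_zero, add_zero]

lemma concaveOn_Eeps (hε : 0 < ε) (hc1 : 0 < c1) (hc2 : 0 < c2) (hμ1 : 0 < μ1) (hμ2 : 0 < μ2)
    (hl1 : Real.log l1 < 0) (hl2 : Real.log l2 < 0) (hp0 : 0 ≤ p) (hp1 : p ≤ 1) :
    ConcaveOn ℝ (Icc (omegaE2 ε c2 μ2) (omegaE1 ε c1 μ1)) (Eeps p ε c1 c2 μ1 μ2 l1 l2) :=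
  (((concaveOn_Leps_Iic hε hc1 hμ1 hl1).subset Icc_subset_Iic_self (convex_Icc _ _)).smul
    hp0).add
  (((concaveOn_Leps_Ici hε hc2 hμ2 hl2).subset Icc_subset_Ici_self (convex_Icc _ _)).smul
    (sub_nonneg.2 hp1))

lemma Eeps_omegaE1_lt_of_lt (hε : 0 < ε) (hc1 : 0 < c1) (hc2 : 0 < c2) (hμ1 : 0 < μ1)
    (hμ2 : 0 < μ2) (hl1 : Real.log l1 < 0) (hl2 : Real.log l2 < 0) (hp0 : 0 < p) (hp1 : p < 1)
    (hord : omegaE2 ε c2 μ2 ≤ omegaE1 ε c1 μ1) {ω : ℝ} (hω : omegaE1 ε c1 μ1 < ω) :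
    Eeps p ε c1 c2 μ1 μ2 l1 l2 (omegaE1 ε c1 μ1) < Eeps p ε c1 c2 μ1 μ2 l1 l2 ω := by
  have h2 := strictMonoOn_Leps hε hc2 hμ2 hl2 hord (hord.trans hω.le) hω
  rw [Eeps_omegaE1 hε hc1 hμ1 hl1, Eeps]
  linarith [mul_nonneg hp0.le (Leps_nonneg ε c1 μ1 l1 ω), mul_lt_mul_of_pos_left h2 (sub_pos.2 hp1)]

lemma Eeps_omegaE2_lt_of_lt (hε : 0 < ε) (hc1 : 0 < c1) (hc2 : 0 < c2) (hμ1 : 0 < μ1)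
    (hμ2 : 0 < μ2) (hl1 : Real.log l1 < 0) (hl2 : Real.log l2 < 0) (hp0 : 0 < p) (hp1 : p < 1)
    (hord : omegaE2 ε c2 μ2 ≤ omegaE1 ε c1 μ1) {ω : ℝ} (hω : ω < omegaE2 ε c2 μ2) :
    Eeps p ε c1 c2 μ1 μ2 l1 l2 (omegaE2 ε c2 μ2) < Eeps p ε c1 c2 μ1 μ2 l1 l2 ω := by
  have h1 := strictAntiOn_Leps hε hc1 hμ1 hl1 (hω.le.trans hord) hord hω
  rw [Eeps_omegaE2 hε hc2 hμ2 hl2, Eeps]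
  linarith [mul_nonneg (sub_nonneg.2 hp1.le) (Leps_nonneg ε c2 μ2 l2 ω),
    mul_lt_mul_of_pos_left h1 hp0]

lemma eventually_omegaE2_lt_omegaE1 (c1 c2 : ℝ) (hμ1 : 0 < μ1) (hμ12 : μ1 < μ2) :
    ∀ᶠ ε in 𝓝[>] 0, omegaE2 ε c2 μ2 < omegaE1 ε c1 μ1 :=
  ((tendsto_omegaE2 c2 μ2).eventually_lt (tendsto_omegaE1 c1 μ1)
    (one_div_lt_one_div_of_lt hμ1 hμ12)).filter_mono nhdsWithin_le_nhds

lemma tendsto_Eeps_omegaE2_sub_Eeps_omegaE1 (hc1 : 0 < c1) (hc2 : 0 < c2) (hμ1 : 0 < μ1)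
    (hμ12 : μ1 < μ2) (hl1 : Real.log l1 < 0) (hl2 : Real.log l2 < 0) :
    ∃ C, Tendsto (fun ε => Eeps p ε c1 c2 μ1 μ2 l1 l2 (omegaE2 ε c2 μ2) -
        Eeps p ε c1 c2 μ1 μ2 l1 l2 (omegaE1 ε c1 μ1) -
        (p / Real.log l1 - (1 - p) / Real.log l2) * Real.log ε) (𝓝[>] 0) (𝓝 C) := by
  have hμ2 : 0 < μ2 := hμ1.trans hμ12
  have hx : Tendsto (fun ε => 1 - omegaE2 ε c2 μ2 * μ1) (𝓝[>] 0) (𝓝 (1 - 1 / μ2 * μ1)) :=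
    (tendsto_const_nhds.sub ((tendsto_omegaE2 c2 μ2).mul_const μ1)).mono_left nhdsWithin_le_nhds
  have hy : Tendsto (fun ε => omegaE1 ε c1 μ1 * μ2 - 1) (𝓝[>] 0) (𝓝 (1 / μ1 * μ2 - 1)) :=
    (((tendsto_omegaE1 c1 μ1).mul_const μ2).sub_const 1).mono_left nhdsWithin_le_nhds
  have hx0 : c1 * (1 - 1 / μ2 * μ1) ≠ 0 := by
    have : 1 / μ2 * μ1 < 1 := by rwa [one_div_mul_eq_div, div_lt_one hμ2]
    exact mul_ne_zero hc1.ne' (by linarith)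
  have hy0 : c2 * (1 / μ1 * μ2 - 1) ≠ 0 := by
    have : 1 < 1 / μ1 * μ2 := by rwa [one_div_mul_eq_div, one_lt_div hμ1]
    exact mul_ne_zero hc2.ne' (by linarith)
  refine ⟨_, (((tendsto_unclippedLeps_sub_log (lam := l1) hx hx0).const_mul p).sub
    ((tendsto_unclippedLeps_sub_log (lam := l2) hy hy0).const_mul (1 - p))).congr' ?_⟩
  filter_upwards [eventually_omegaE2_lt_omegaE1 c1 c2 hμ1 hμ12, self_mem_nhdsWithin]
    with ε hord hε
  rw [Eeps_omegaE1 hε hc1 hμ1 hl1, Eeps_omegaE2 hε hc2 hμ2 hl2,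
    Leps_of_le_omegaE1 hε hc1 hμ1 hl1 hord.le, Leps_of_omegaE2_le hε hc2 hμ2 hl2 hord.le]
  ring

lemma eventually_forall_Eeps_omegaE1_lt (hc1 : 0 < c1) (hc2 : 0 < c2) (hμ1 : 0 < μ1)
    (hμ12 : μ1 < μ2) (hl1 : Real.log l1 < 0) (hl2 : Real.log l2 < 0) (hp0 : 0 < p) (hp1 : p < 1)
    (hp : p / Real.log l1 < (1 - p) / Real.log l2) :
    ∀ᶠ ε in 𝓝[>] 0, ∀ ω ≠ omegaE1 ε c1 μ1,
      Eeps p ε c1 c2 μ1 μ2 l1 l2 (omegaE1 ε c1 μ1) < Eeps p ε c1 c2 μ1 μ2 l1 l2 ω := by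
  have hμ2 : 0 < μ2 := hμ1.trans hμ12
  obtain ⟨C, hC⟩ := tendsto_Eeps_omegaE2_sub_Eeps_omegaE1 (p := p) hc1 hc2 hμ1 hμ12 hl1 hl2
  have hgap := (Real.tendsto_log_nhdsGT_zero.const_mul_atBot_of_neg (sub_neg.2 hp)).atTop_add hC
  filter_upwards [hgap.eventually_gt_atTop 0, eventually_omegaE2_lt_omegaE1 c1 c2 hμ1 hμ12,
    self_mem_nhdsWithin] with ε hdiff hord hε ω hω
  exact (concaveOn_Eeps hε hc1 hc2 hμ1 hμ2 hl1 hl2 hp0.le hp1.le).apply_right_lt_of_ne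
    (fun _ hy => Eeps_omegaE2_lt_of_lt hε hc1 hc2 hμ1 hμ2 hl1 hl2 hp0 hp1 hord.le hy)
    (fun _ hy => Eeps_omegaE1_lt_of_lt hε hc1 hc2 hμ1 hμ2 hl1 hl2 hp0 hp1 hord.le hy)
    (by linarith) hω

lemma eventually_forall_Eeps_omegaE2_lt (hc1 : 0 < c1) (hc2 : 0 < c2) (hμ1 : 0 < μ1)
    (hμ12 : μ1 < μ2) (hl1 : Real.log l1 < 0) (hl2 : Real.log l2 < 0) (hp0 : 0 < p) (hp1 : p < 1)
    (hp : (1 - p) / Real.log l2 < p / Real.log l1) :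
    ∀ᶠ ε in 𝓝[>] 0, ∀ ω ≠ omegaE2 ε c2 μ2,
      Eeps p ε c1 c2 μ1 μ2 l1 l2 (omegaE2 ε c2 μ2) < Eeps p ε c1 c2 μ1 μ2 l1 l2 ω := by
  have hμ2 : 0 < μ2 := hμ1.trans hμ12
  obtain ⟨C, hC⟩ := tendsto_Eeps_omegaE2_sub_Eeps_omegaE1 (p := p) hc1 hc2 hμ1 hμ12 hl1 hl2
  have hgap := (Real.tendsto_log_nhdsGT_zero.const_mul_atBot (sub_pos.2 hp)).atBot_add hC
  filter_upwards [hgap.eventually_lt_atBot 0, eventually_omegaE2_lt_omegaE1 c1 c2 hμ1 hμ12,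
    self_mem_nhdsWithin] with ε hdiff hord hε ω hω
  exact (concaveOn_Eeps hε hc1 hc2 hμ1 hμ2 hl1 hl2 hp0.le hp1.le).apply_left_lt_of_ne
    (fun _ hy => Eeps_omegaE2_lt_of_lt hε hc1 hc2 hμ1 hμ2 hl1 hl2 hp0 hp1 hord.le hy)
    (fun _ hy => Eeps_omegaE1_lt_of_lt hε hc1 hc2 hμ1 hμ2 hl1 hl2 hp0 hp1 hord.le hy)
    (by linarith) hω

end TwoTasks

lemma pZero_lt_iff {l1 l2 p : ℝ} (hl1 : Real.log l1 < 0) (hl2 : Real.log l2 < 0) :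
    pZero l1 l2 < p ↔ p / Real.log l1 < (1 - p) / Real.log l2 := by
  rw [pZero, div_lt_iff_of_neg (by linarith), ← neg_div_neg_eq p, ← neg_div_neg_eq (1 - p),
    div_lt_div_iff₀ (neg_pos.2 hl1) (neg_pos.2 hl2)]
  constructor <;> intro h <;> linarith

lemma lt_pZero_iff {l1 l2 p : ℝ} (hl1 : Real.log l1 < 0) (hl2 : Real.log l2 < 0) :
    p < pZero l1 l2 ↔ (1 - p) / Real.log l2 < p / Real.log l1 := by
  rw [pZero, lt_div_iff_of_neg (by linarith), ← neg_div_neg_eq p, ← neg_div_neg_eq (1 - p),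
    div_lt_div_iff₀ (neg_pos.2 hl2) (neg_pos.2 hl1)]
  constructor <;> intro h <;> linarith

/-- For small enough tolerance, the unique minimizer of `E_ε` is `ω_(ε,1)` when
`p > p_0` and `ω_(ε,2)` when `p < p_0`; consequently the minimizers converge to
`1/μ1` (resp. `1/μ2`) as `ε → 0⁺`. -/
theorem Eeps_minimizer_limit (μ1 μ2 l1 l2 c1 c2 p : ℝ)
    (hμ1 : 0 < μ1) (hμ12 : μ1 < μ2) (hμ2 : μ2 < 2)
    (hl1 : l1 = 1 - μ1 / 2) (hl2 : l2 = 1 - μ2 / 2)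
    (hc1 : 0 < c1) (hc2 : 0 < c2) (hp0 : 0 < p) (hp1 : p < 1) :
    (p > pZero l1 l2 →
      (∃ ε0 : ℝ, 0 < ε0 ∧ ε0 < c1 * c2 * (μ2 - μ1) / (c1 * μ1 + c2 * μ2) ∧
        ∀ ε ∈ Set.Ioo (0 : ℝ) ε0, ∀ ω : ℝ, ω ≠ omegaE1 ε c1 μ1 →
          Eeps p ε c1 c2 μ1 μ2 l1 l2 ω >
            Eeps p ε c1 c2 μ1 μ2 l1 l2 (omegaE1 ε c1 μ1)) ∧
      Filter.Tendsto (fun ε : ℝ => omegaE1 ε c1 μ1)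
        (nhdsWithin 0 (Set.Ioi 0)) (nhds (1 / μ1))) ∧
    (p < pZero l1 l2 →
      (∃ ε0 : ℝ, 0 < ε0 ∧
        ∀ ε ∈ Set.Ioo (0 : ℝ) ε0, ∀ ω : ℝ, ω ≠ omegaE2 ε c2 μ2 →
          Eeps p ε c1 c2 μ1 μ2 l1 l2 ω >
            Eeps p ε c1 c2 μ1 μ2 l1 l2 (omegaE2 ε c2 μ2)) ∧
      Filter.Tendsto (fun ε : ℝ => omegaE2 ε c2 μ2)
        (nhdsWithin 0 (Set.Ioi 0)) (nhds (1 / μ2))) := by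
  have hL1 : Real.log l1 < 0 := Real.log_neg (by linarith) (by linarith)
  have hL2 : Real.log l2 < 0 := Real.log_neg (by linarith) (by linarith)
  refine ⟨fun hp => ⟨?_, (tendsto_omegaE1 c1 μ1).mono_left nhdsWithin_le_nhds⟩,
    fun hp => ⟨?_, (tendsto_omegaE2 c2 μ2).mono_left nhdsWithin_le_nhds⟩⟩
  · have hbound : 0 < c1 * c2 * (μ2 - μ1) / (c1 * μ1 + c2 * μ2) := by
      have := sub_pos.2 hμ12
      have := hμ1.trans hμ12
      positivity
    exact exists_forall_Ioo_of_eventually_nhdsGT (eventually_forall_Eeps_omegaE1_lt hc1 hc2 hμ1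
      hμ12 hL1 hL2 hp0 hp1 ((pZero_lt_iff hL1 hL2).1 hp)) hbound
  · obtain ⟨ε0, hε0, hmin⟩ := (nhdsGT_basis 0).eventually_iff.1
      (eventually_forall_Eeps_omegaE2_lt hc1 hc2 hμ1 hμ12 hL1 hL2 hp0 hp1
        ((lt_pZero_iff hL1 hL2).1 hp))
    exact ⟨ε0, hε0, fun ε hε => hmin hε⟩
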